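/- Let C be a braided monoidal category with braiding β, A a commutative monoid object, V an object of C and X a module over A. Then the morphism (id_V ⊗ μ_X) ∘ (β_{A,V} ⊗ id_X) : (A ⊗ V) ⊗ X ⟶ V ⊗ X coequalizes the two morphisms μ₁, μ₂ defining F(V) ⊗_A X, and the induced morphism F(V) ⊗_A X ⟶ V ⊗ X is an isomorphism in C, with inverse π_{F(V),X} ∘ (ι ⊗ id_V ⊗ id_X). In particular G(F(V) ⊗_A X) ≅ V ⊗ G(X) naturally, and G(F(V)) ≅ A ⊗ V. -/

import Mathlib

/-!
The action map `p = (id_V ⊗ μ_X) ∘ (β_{A,V} ⊗ id_X)` makes `μ₂, μ₁ ⇉ p` a split coequalizer,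
split by `s = ι ⊗ id_V ⊗ id_X` and `t = id_A ⊗ ι ⊗ id_V ⊗ id_X`: `p ∘ s = id` is the unit law
of `X`, `μ₁ ∘ t = id` the unit law of `A`, and `μ₂ ∘ t = s ∘ p` is naturality of `p` in `V`;
commutativity of `A` is exactly what makes `p` coequalize `μ₁` and `μ₂`. The comparison map
from the chosen coequalizer `F(V) ⊗_A X` to `V ⊗ X` is then inverse to `π ∘ s`.
-/

open CategoryTheory MonoidalCategory Limits

universe v u

variable {C : Type u} [Category.{v} C] [MonoidalCategory C] [BraidedCategory C]

/-- The free module `F(V) = A ⊗ V` over a monoid object `A`, with action `μ ⊗ id_V`. -/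
@[simps]
def freeMod (A : Mon C) (V : C) : Mod C A.X where
  X := A.X ⊗ V
  mod :=
  { smul := (α_ A.X A.X V).inv ≫ (MonObj.mul (X := A.X) ▷ V)
    one_smul := by
      simp only [selfLeftAction_actionHomLeft,
        selfLeftAction_actionUnitIso]
      rw [associator_inv_naturality_left_assoc, ← comp_whiskerRight, MonObj.one_mul]
      simp
    mul_smul := by
      simp only [selfLeftAction_actionHomLeft,
        selfLeftAction_actionHomRight,
        selfLeftAction_actionAssocIso, MonoidalCategory.whiskerLeft_comp]
      slice_rhs 3 4 => rw [associator_inv_naturality_middle]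
      rw [associator_inv_naturality_left_assoc, ← comp_whiskerRight, MonObj.mul_assoc]
      simp only [comp_whiskerRight, Category.assoc]
      simp }

/-- The first of the two morphisms whose coequalizer is `X ⊗_A Y`, namely `μ_X ⊗ id_Y`. -/
def mapOne {A : Mon C} (X Y : Mod C A.X) : (A.X ⊗ X.X) ⊗ Y.X ⟶ X.X ⊗ Y.X := ModObj.smul (M := A.X) (X := X.X) ▷ Y.X

/-- The second of the two morphisms whose coequalizer is `X ⊗_A Y`, namely
`(id_X ⊗ μ_Y) ∘ (β_{A,X} ⊗ id_Y)`. -/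
def mapTwo {A : Mon C} (X Y : Mod C A.X) : (A.X ⊗ X.X) ⊗ Y.X ⟶ X.X ⊗ Y.X :=
  ((β_ A.X X.X).hom ▷ Y.X) ≫ (α_ X.X A.X Y.X).hom ≫ (X.X ◁ ModObj.smul (M := A.X) (X := Y.X))

variable [HasCoequalizers C]

/-- The underlying object of `X ⊗_A Y`: the coequalizer of `mapOne` and `mapTwo`. -/
noncomputable def tensorQ {A : Mon C} (X Y : Mod C A.X) : C :=
  coequalizer (mapOne X Y) (mapTwo X Y)

/-- The canonical projection `π_{X,Y} : X ⊗ Y ⟶ X ⊗_A Y`. -/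
noncomputable def tensorπ {A : Mon C} (X Y : Mod C A.X) : X.X ⊗ Y.X ⟶ tensorQ X Y :=
  coequalizer.π _ _

/-- The morphism `(id_V ⊗ μ_X) ∘ (β_{A,V} ⊗ id_X) : (A ⊗ V) ⊗ X ⟶ V ⊗ X`. -/
def projC (A : Mon C) (V : C) (X : Mod C A.X) : (A.X ⊗ V) ⊗ X.X ⟶ V ⊗ X.X :=
  ((β_ A.X V).hom ▷ X.X) ≫ (α_ V A.X X.X).hom ≫ (V ◁ ModObj.smul (M := A.X) (X := X.X))

namespace CategoryTheory.IsSplitCoequalizer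

variable {E : Type*} [Category E] {X Y Z : E} {f g : X ⟶ Y} {π : Y ⟶ Z}

theorem π_comp_rightSection_comp (t : IsSplitCoequalizer f g π) {W : E} (q : Y ⟶ W)
    (hq : f ≫ q = g ≫ q) : π ≫ t.rightSection ≫ q = q := by
  rw [← t.leftSection_top_assoc, hq, t.leftSection_bottom_assoc]

variable [HasCoequalizer g f] (t : IsSplitCoequalizer f g π)

theorem coequalizer_desc_comp_rightSection_comp_π :
    coequalizer.desc π t.condition.symm ≫ t.rightSection ≫ coequalizer.π g f = 𝟙 _ := by
  refine coequalizer.hom_ext ?_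
  rw [coequalizer.π_desc_assoc, Category.comp_id]
  exact t.π_comp_rightSection_comp _ (coequalizer.condition g f).symm

theorem rightSection_comp_π_comp_coequalizer_desc :
    (t.rightSection ≫ coequalizer.π g f) ≫ coequalizer.desc π t.condition.symm = 𝟙 _ := by
  rw [Category.assoc, coequalizer.π_desc, t.rightSection_π]

end CategoryTheory.IsSplitCoequalizer

section Monoidal

variable {D : Type*} [Category D] [MonoidalCategory D] (A : Mon D) (V : D)

def freeUnit : V ⟶ A.X ⊗ V := (λ_ V).inv ≫ MonObj.one (X := A.X) ▷ V

theorem whiskerLeft_freeUnit_whiskerRight_mapOne (X : Mod D A.X) :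
    (A.X ◁ freeUnit A V) ▷ X.X ≫ mapOne (freeMod A V) X = 𝟙 _ := by
  have right_unit : A.X ◁ freeUnit A V ≫ (α_ A.X A.X V).inv ≫ MonObj.mul ▷ V = 𝟙 _ := by
    rw [freeUnit, MonoidalCategory.whiskerLeft_comp_assoc, associator_inv_naturality_middle_assoc,
      ← comp_whiskerRight, MonObj.mul_one]
    monoidal
  change (A.X ◁ freeUnit A V) ▷ X.X ≫ ((α_ A.X A.X V).inv ≫ MonObj.mul ▷ V) ▷ X.X = 𝟙 _
  rw [← comp_whiskerRight, right_unit, id_whiskerRight]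

end Monoidal

section Braided

variable {D : Type*} [Category D] [MonoidalCategory D] [BraidedCategory D] (A : Mon D) (V : D)
  (X : Mod D A.X)

theorem projC_naturality {V' : D} (f : V' ⟶ V) :
    (A.X ◁ f) ▷ X.X ≫ projC A V X = projC A V' X ≫ f ▷ X.X := by
  rw [projC, ← comp_whiskerRight_assoc, BraidedCategory.braiding_naturality_right,
    comp_whiskerRight, Category.assoc, associator_naturality_left_assoc, ← whisker_exchange, projC]
  simp only [Category.assoc]

theorem freeUnit_whiskerRight_projC : freeUnit A V ▷ X.X ≫ projC A V X = 𝟙 _ := by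
  rw [freeUnit, projC, ← comp_whiskerRight_assoc, Category.assoc,
    BraidedCategory.braiding_naturality_left, braiding_tensorUnit_left]
  simp only [comp_whiskerRight, Category.assoc]
  rw [associator_naturality_middle_assoc, ← MonoidalCategory.whiskerLeft_comp, ModObj.one_smul_self]
  monoidal

/- On generalized elements the two sides send `a ⊗ a' ⊗ v ⊗ x` to `v ⊗ (a a') x` and to
`v ⊗ a' (a x)`. -/
theorem mapOne_comp_projC_eq_mapTwo_comp_projC
    (hcomm : (β_ A.X A.X).hom ≫ MonObj.mul (X := A.X) = MonObj.mul (X := A.X)) :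
    mapOne (freeMod A V) X ≫ projC A V X = mapTwo (freeMod A V) X ≫ projC A V X := by
  change ((α_ A.X A.X V).inv ≫ MonObj.mul ▷ V) ▷ X.X ≫ projC A V X
    = projC A (A.X ⊗ V) X ≫ projC A V X
  rw [← hcomm]
  simp only [projC, comp_whiskerRight, Category.assoc, BraidedCategory.braiding_tensor_right_hom]
  rw [← comp_whiskerRight_assoc (MonObj.mul (X := A.X) ▷ V) (β_ A.X V).hom,
    BraidedCategory.braiding_naturality_left]
  simp only [comp_whiskerRight, Category.assoc, BraidedCategory.braiding_tensor_left_hom]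
  rw [associator_naturality_middle_assoc, ← MonoidalCategory.whiskerLeft_comp,
    ModObj.mul_smul_self, whisker_exchange_assoc]
  simp only [MonoidalCategory.whiskerLeft_comp]
  monoidal

def isSplitCoequalizerProjC
    (hcomm : (β_ A.X A.X).hom ≫ MonObj.mul (X := A.X) = MonObj.mul (X := A.X)) :
    IsSplitCoequalizer (mapTwo (freeMod A V) X) (mapOne (freeMod A V) X) (projC A V X) where
  rightSection := freeUnit A V ▷ X.X
  leftSection := (A.X ◁ freeUnit A V) ▷ X.X
  condition := (mapOne_comp_projC_eq_mapTwo_comp_projC A V X hcomm).symm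
  rightSection_π := freeUnit_whiskerRight_projC A V X
  leftSection_bottom := whiskerLeft_freeUnit_whiskerRight_mapOne A V X
  -- `mapTwo (freeMod A V) X` is `projC A (A.X ⊗ V) X` by definition.
  leftSection_top := projC_naturality A (A.X ⊗ V) X (freeUnit A V)

end Braided

theorem free_tensor_module_forget
    (A : Mon C) (hcomm : (β_ A.X A.X).hom ≫ MonObj.mul (X := A.X) = MonObj.mul (X := A.X)) (V : C) (X : Mod C A.X) :
    ∃ h : mapOne (freeMod A V) X ≫ projC A V X = mapTwo (freeMod A V) X ≫ projC A V X,
      -- the induced morphism `F(V) ⊗_A X ⟶ V ⊗ X` is an isomorphism with inverse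
      -- `π_{F(V),X} ∘ (ι ⊗ id_V ⊗ id_X)` ...
      (coequalizer.desc (projC A V X) h
          ≫ ((((λ_ V).inv ≫ (MonObj.one (X := A.X) ▷ V)) ▷ X.X) ≫ tensorπ (freeMod A V) X)
        = 𝟙 (tensorQ (freeMod A V) X)) ∧
      (((((λ_ V).inv ≫ (MonObj.one (X := A.X) ▷ V)) ▷ X.X) ≫ tensorπ (freeMod A V) X)
          ≫ coequalizer.desc (projC A V X) h = 𝟙 (V ⊗ X.X)) ∧
      -- ... naturally in `V`
      (∀ (V' : C) (f : V' ⟶ V),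
          ((A.X ◁ f) ▷ X.X) ≫ projC A V X = projC A V' X ≫ (f ▷ X.X)) := by
  let t := isSplitCoequalizerProjC A V X hcomm
  exact ⟨t.condition.symm, t.coequalizer_desc_comp_rightSection_comp_π,
    t.rightSection_comp_π_comp_coequalizer_desc, fun _ f => projC_naturality A V X f⟩
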